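/- For r ≥ 3, the minimum excess of a full r-SAT formula is r - 2, achieved uniquely (up to isomorphism) by the formula F_L on r variables consisting of the two clauses (X₁ ∨ ⋯ ∨ X_r) and (¬X₁ ∨ ⋯ ∨ ¬X_r). -/
import Mathlib


/-- An `r`-SAT formula: a finite set of variables and a finite set of clauses,
each clause a set of `r` literals (signed variables) on `r` distinct variables
drawn from the variable set. -/
structure CNF (r : ℕ) where
  vars : Finset ℕ
  clauses : Finset (Finset (ℕ × Bool))
  card_clause : ∀ c ∈ clauses, c.card = r
  distinct_vars : ∀ c ∈ clauses, (c.image Prod.fst).card = r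
  support : ∀ c ∈ clauses, ∀ l ∈ c, l.1 ∈ vars

/-- The excess of a formula: `(r-1)·e(H) - |H|`. -/
def CNF.excess {r : ℕ} (H : CNF r) : ℤ :=
  ((r : ℤ) - 1) * H.clauses.card - H.vars.card

/-- A formula is full if it is nonempty and every variable appears both
positively and negatively in some clause. -/
def CNF.Full {r : ℕ} (H : CNF r) : Prop :=
  H.clauses.Nonempty ∧ ∀ v ∈ H.vars, ∀ b : Bool, ∃ c ∈ H.clauses, (v, b) ∈ c

/-- Isomorphism of formulae: a bijection of the variables together with sign
flips that maps clauses to clauses and variables to variables. -/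
def CNF.Iso {r : ℕ} (H H' : CNF r) : Prop :=
  ∃ (π : ℕ ≃ ℕ) (σ : ℕ → Bool),
    H'.vars = H.vars.image π ∧
    H'.clauses = H.clauses.image (fun c => c.image fun l => (π l.1, xor l.2 (σ l.1)))

/-- The formula `F_L` on `r` variables with the two clauses
`(X₁ ∨ ⋯ ∨ X_r)` and `(¬X₁ ∨ ⋯ ∨ ¬X_r)`. -/
def FL (r : ℕ) : CNF r where
  vars := Finset.range r
  clauses := {(Finset.range r).image (fun i => (i, true)),
              (Finset.range r).image (fun i => (i, false))}
  card_clause := by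
    intro c hc
    simp only [Finset.mem_insert, Finset.mem_singleton] at hc
    rcases hc with rfl | rfl <;>
      rw [Finset.card_image_of_injective _ (fun a b h => by simpa using h)] <;>
      simp
  distinct_vars := by
    intro c hc
    simp only [Finset.mem_insert, Finset.mem_singleton] at hc
    rcases hc with rfl | rfl <;>
      · rw [Finset.image_image]
        simp [Function.comp_def]
  support := by
    intro c hc l hl
    simp only [Finset.mem_insert, Finset.mem_singleton] at hc
    rcases hc with rfl | rfl <;>
      · simp only [Finset.mem_image] at hl
        obtain ⟨i, hi, rfl⟩ := hl
        simpa using hi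


section Aux
variable {r : ℕ}

lemma CNF.injOn_fst (H : CNF r) {c : Finset (ℕ × Bool)} (hc : c ∈ H.clauses) :
    Set.InjOn Prod.fst (c : Set (ℕ × Bool)) := by
  have : (c.image Prod.fst).card = c.card := by
    rw [H.distinct_vars c hc, H.card_clause c hc]
  exact Finset.card_image_iff.mp this

lemma CNF.not_both (H : CNF r) {c : Finset (ℕ × Bool)} (hc : c ∈ H.clauses)
    {v : ℕ} {b : Bool} (h1 : (v, b) ∈ c) (h2 : (v, !b) ∈ c) : False := by
  have := H.injOn_fst hc (Finset.mem_coe.mpr h1) (Finset.mem_coe.mpr h2) rfl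
  simp at this

lemma CNF.two_le_clauses (H : CNF r) (hr : 3 ≤ r) (hF : H.Full) : 2 ≤ H.clauses.card := by
  obtain ⟨⟨c, hc⟩, hfull⟩ := hF
  have hcne : c.Nonempty := by
    rw [← Finset.card_pos, H.card_clause c hc]; omega
  obtain ⟨⟨v, b⟩, hl⟩ := hcne
  have hv : v ∈ H.vars := H.support c hc _ hl
  obtain ⟨ct, hct, hvt⟩ := hfull v hv true
  obtain ⟨cf, hcf, hvf⟩ := hfull v hv false
  have hne : ct ≠ cf := by
    rintro rfl
    exact H.not_both hct hvt (by simpa using hvf)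
  calc 2 = ({ct, cf} : Finset _).card := (Finset.card_pair hne).symm
    _ ≤ H.clauses.card := Finset.card_le_card (by
        intro x hx
        simp only [Finset.mem_insert, Finset.mem_singleton] at hx
        rcases hx with rfl | rfl <;> assumption)

lemma CNF.count_le (H : CNF r) (hF : H.Full) :
    2 * H.vars.card ≤ r * H.clauses.card := by
  classical
  have h1 : r * H.clauses.card = ∑ c ∈ H.clauses, (H.vars.filter (fun v => v ∈ c.image Prod.fst)).card := by
    rw [Finset.sum_congr rfl (g := fun c => r) ?_, Finset.sum_const, smul_eq_mul, mul_comm]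
    intro c hc
    have hsub : c.image Prod.fst ⊆ H.vars := by
      intro v hv
      obtain ⟨l, hl, rfl⟩ := Finset.mem_image.mp hv
      exact H.support c hc l hl
    have : H.vars.filter (fun v => v ∈ c.image Prod.fst) = c.image Prod.fst := by
      rw [Finset.filter_mem_eq_inter, Finset.inter_eq_right.mpr hsub]
    rw [this, H.distinct_vars c hc]
  have h2 : ∑ c ∈ H.clauses, (H.vars.filter (fun v => v ∈ c.image Prod.fst)).card
      = ∑ v ∈ H.vars, (H.clauses.filter (fun c => v ∈ c.image Prod.fst)).card := by
    simp_rw [Finset.card_filter]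
    rw [Finset.sum_comm]
  have h3 : ∀ v ∈ H.vars, 2 ≤ (H.clauses.filter (fun c => v ∈ c.image Prod.fst)).card := by
    intro v hv
    obtain ⟨ct, hct, hvt⟩ := hF.2 v hv true
    obtain ⟨cf, hcf, hvf⟩ := hF.2 v hv false
    have hne : ct ≠ cf := by
      rintro rfl
      exact H.not_both hct hvt (by simpa using hvf)
    calc 2 = ({ct, cf} : Finset _).card := (Finset.card_pair hne).symm
      _ ≤ _ := Finset.card_le_card (by
          intro x hx
          simp only [Finset.mem_insert, Finset.mem_singleton] at hx
          rcases hx with rfl | rfl <;>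
            · rw [Finset.mem_filter]
              exact ⟨by assumption, Finset.mem_image.mpr ⟨_, by assumption, rfl⟩⟩)
  calc 2 * H.vars.card = ∑ _v ∈ H.vars, 2 := by rw [Finset.sum_const, smul_eq_mul, mul_comm]
    _ ≤ ∑ v ∈ H.vars, (H.clauses.filter (fun c => v ∈ c.image Prod.fst)).card :=
        Finset.sum_le_sum h3
    _ = _ := by rw [← h2, ← h1]

end Aux


lemma exists_perm_image (s t : Finset ℕ) (h : s.card = t.card) :
    ∃ π : ℕ ≃ ℕ, s.image π = t := by
  classical
  have e1 : (↑s : Set ℕ) ≃ (↑t : Set ℕ) :=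
    (Equiv.subtypeEquivRight (fun x => by simp)).trans
      ((Finset.equivOfCardEq h).trans (Equiv.subtypeEquivRight (fun x => by simp)))
  have hs : ((↑s : Set ℕ)ᶜ).Infinite := s.finite_toSet.infinite_compl
  have ht : ((↑t : Set ℕ)ᶜ).Infinite := t.finite_toSet.infinite_compl
  have hsi := hs.to_subtype
  have hti := ht.to_subtype
  obtain ⟨e2⟩ : Nonempty (((↑s : Set ℕ)ᶜ : Set ℕ) ≃ ((↑t : Set ℕ)ᶜ : Set ℕ)) :=
    nonempty_equiv_of_countable
  refine ⟨(Equiv.Set.sumCompl (↑s : Set ℕ)).symm.trans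
    ((e1.sumCongr e2).trans (Equiv.Set.sumCompl (↑t : Set ℕ))), ?_⟩
  set π := (Equiv.Set.sumCompl (↑s : Set ℕ)).symm.trans
    ((e1.sumCongr e2).trans (Equiv.Set.sumCompl (↑t : Set ℕ))) with hπ
  have hmaps : ∀ x ∈ s, π x ∈ t := by
    intro x hx
    have h1 : (Equiv.Set.sumCompl (↑s : Set ℕ)).symm x = Sum.inl ⟨x, by simpa using hx⟩ :=
      Equiv.Set.sumCompl_symm_apply_of_mem (by simpa using hx)
    have : π x = ↑(e1 ⟨x, by simpa using hx⟩) := by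
      rw [hπ]; simp only [Equiv.trans_apply, Equiv.sumCongr_apply, h1, Sum.map_inl, Equiv.Set.sumCompl_apply_inl]
    rw [this]
    exact_mod_cast (e1 _).2
  apply Finset.eq_of_subset_of_card_le
  · intro y hy
    obtain ⟨x, hx, rfl⟩ := Finset.mem_image.mp hy
    exact hmaps x hx
  · rw [Finset.card_image_of_injective _ π.injective, h]



lemma FL_clause_ne {r : ℕ} (hr : 3 ≤ r) :
    (Finset.range r).image (fun i => (i, true)) ≠ (Finset.range r).image (fun i => (i, false)) := by
  intro h
  have h0 : ((0 : ℕ), true) ∈ (Finset.range r).image (fun i => (i, true)) :=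
    Finset.mem_image.mpr ⟨0, by simp; omega, rfl⟩
  rw [h] at h0
  obtain ⟨i, _, hi⟩ := Finset.mem_image.mp h0
  simp at hi

lemma FL_full {r : ℕ} (hr : 3 ≤ r) : (FL r).Full := by
  constructor
  · exact ⟨_, Finset.mem_insert_self _ _⟩
  · intro v hv b
    cases b
    · exact ⟨(Finset.range r).image (fun i => (i, false)),
        Finset.mem_insert.mpr (Or.inr (Finset.mem_singleton_self _)),
        Finset.mem_image.mpr ⟨v, hv, rfl⟩⟩
    · exact ⟨(Finset.range r).image (fun i => (i, true)),
        Finset.mem_insert_self _ _, Finset.mem_image.mpr ⟨v, hv, rfl⟩⟩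

lemma FL_excess {r : ℕ} (hr : 3 ≤ r) : (FL r).excess = (r : ℤ) - 2 := by
  have hcard : (FL r).clauses.card = 2 := by
    show ({_, _} : Finset _).card = 2
    exact Finset.card_pair (FL_clause_ne hr)
  have hv : (FL r).vars.card = r := Finset.card_range r
  rw [CNF.excess, hcard, hv]
  ring

/-- For `r ≥ 3`, the minimum excess of a full `r`-SAT formula is `r - 2`,
achieved uniquely (up to isomorphism) by the formula `F_L`. -/
theorem min_excess_full {r : ℕ} (hr : 3 ≤ r) :
    (∀ H : CNF r, H.Full → (r : ℤ) - 2 ≤ H.excess) ∧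
    (FL r).Full ∧ (FL r).excess = (r : ℤ) - 2 ∧
    (∀ H : CNF r, H.Full → H.excess = (r : ℤ) - 2 → CNF.Iso H (FL r)) := by
  have key : ∀ H : CNF r, H.Full →
      (2:ℤ) * H.vars.card ≤ r * H.clauses.card ∧ (2:ℤ) ≤ H.clauses.card := by
    intro H hF
    constructor
    · exact_mod_cast H.count_le hF
    · exact_mod_cast H.two_le_clauses hr hF
  have hr' : (3:ℤ) ≤ (r:ℤ) := by exact_mod_cast hr
  have lb : ∀ H : CNF r, H.Full → (r : ℤ) - 2 ≤ H.excess := by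
    intro H hF
    obtain ⟨h1, h2⟩ := key H hF
    rw [CNF.excess]
    nlinarith [mul_nonneg (by linarith : (0:ℤ) ≤ (r:ℤ)-2)
      (by linarith : (0:ℤ) ≤ (H.clauses.card:ℤ)-2)]
  refine ⟨lb, FL_full hr, FL_excess hr, ?_⟩
  intro H hF heq
  classical
  obtain ⟨h1, h2⟩ := key H hF
  -- derive e = 2 and t = r
  have he : H.clauses.card = 2 := by
    rw [CNF.excess] at heq
    have : ((H.clauses.card : ℤ) - 2) * ((r:ℤ) - 2) ≤ 0 := by nlinarith
    have h3 : (H.clauses.card : ℤ) ≤ 2 := by nlinarith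
    omega
  have ht : H.vars.card = r := by
    rw [CNF.excess] at heq
    have : (H.vars.card : ℤ) = r := by
      rw [he] at heq h1
      push_cast at heq h1 ⊢
      linarith
    exact_mod_cast this
  obtain ⟨c1, c2, hne, hcl⟩ := Finset.card_eq_two.mp he
  have hc1 : c1 ∈ H.clauses := by rw [hcl]; exact Finset.mem_insert_self _ _
  have hc2 : c2 ∈ H.clauses := by
    rw [hcl]; exact Finset.mem_insert.mpr (Or.inr (Finset.mem_singleton_self _))
  -- each clause covers all variables
  have hcov : ∀ c ∈ H.clauses, c.image Prod.fst = H.vars := by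
    intro c hc
    apply Finset.eq_of_subset_of_card_le
    · intro v hv
      obtain ⟨l, hl, rfl⟩ := Finset.mem_image.mp hv
      exact H.support c hc l hl
    · rw [ht, H.distinct_vars c hc]
  -- opposite signs
  have opp12 : ∀ v : ℕ, ∀ b : Bool, (v, b) ∈ c1 → (v, !b) ∈ c2 := by
    intro v b hvb
    have hv : v ∈ H.vars := H.support c1 hc1 _ hvb
    obtain ⟨c, hc, hmem⟩ := hF.2 v hv (!b)
    rw [hcl] at hc
    simp only [Finset.mem_insert, Finset.mem_singleton] at hc
    rcases hc with rfl | rfl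
    · exact absurd hmem (fun hmem => H.not_both hc1 hvb hmem)
    · exact hmem
  have opp21 : ∀ v : ℕ, ∀ b : Bool, (v, b) ∈ c2 → (v, !b) ∈ c1 := by
    intro v b hvb
    have hv : v ∈ H.vars := H.support c2 hc2 _ hvb
    obtain ⟨c, hc, hmem⟩ := hF.2 v hv (!b)
    rw [hcl] at hc
    simp only [Finset.mem_insert, Finset.mem_singleton] at hc
    rcases hc with rfl | rfl
    · exact hmem
    · exact absurd hmem (fun hmem => H.not_both hc2 hvb hmem)
  -- the permutation
  obtain ⟨π, hπ⟩ := exists_perm_image H.vars (Finset.range r)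
    (by rw [ht, Finset.card_range])
  set σ : ℕ → Bool := fun v => if (v, true) ∈ c1 then false else true with hσ
  set g : ℕ × Bool → ℕ × Bool := fun l => (π l.1, xor l.2 (σ l.1)) with hg
  have hg1 : ∀ l ∈ c1, g l = (π l.1, true) := by
    rintro ⟨v, b⟩ hl
    cases b
    · have : (v, true) ∉ c1 := fun h => H.not_both hc1 h (by simpa using hl)
      simp [hg, hσ, this]
    · simp [hg, hσ, hl]
  have hg2 : ∀ l ∈ c2, g l = (π l.1, false) := by
    rintro ⟨v, b⟩ hl
    have h1' := opp21 v _ hl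
    cases b
    · simp only [Bool.not_false] at h1'
      simp [hg, hσ, h1']
    · have : (v, true) ∉ c1 := fun h => H.not_both hc1 h (by simpa using h1')
      simp [hg, hσ, this]
  have keyimg : ∀ (c : Finset (ℕ × Bool)) (hc : c ∈ H.clauses) (b : Bool),
      (∀ l ∈ c, g l = (π l.1, b)) →
      c.image g = (Finset.range r).image (fun i => (i, b)) := by
    intro c hc b hb
    have : c.image g = (c.image Prod.fst).image (fun v => (π v, b)) := by
      rw [Finset.image_image]
      exact Finset.image_congr (fun l hl => hb l hl)
    rw [this, hcov c hc, ← hπ, Finset.image_image]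
    rfl
  refine ⟨π, σ, ?_, ?_⟩
  · show (FL r).vars = H.vars.image π
    rw [hπ]; rfl
  · show (FL r).clauses = H.clauses.image (fun c => c.image g)
    rw [hcl, Finset.image_insert, Finset.image_singleton,
      keyimg c1 hc1 true hg1, keyimg c2 hc2 false hg2]
    rfl
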